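/- arXiv:1108.5634 — 5 statements merged into one kernel-verified Lean document; each statement's English description precedes it below -/
import Mathlib

section
/- Let (Ω, μ) be a measure space, let g : Ω → [0,∞] be measurable with ∫_Ω g dμ < ∞, let w : Ω → [0,∞) be measurable, and let A ≥ 0. Then the following are equivalent: (i) for every real σ > 0, ∫_Ω w(x)^σ g(x) dμ(x) ≤ A^σ ∫_Ω g(x) dμ(x); (ii) g = 0 μ-almost everywhere on the set {x ∈ Ω : w(x) > A}. -/
/-!
Where `w ≤ A` we have `w ^ σ g ≤ A ^ σ g`, which gives the inequalities when `g` vanishes a.e.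
on `{A < w}`. Conversely, for `c > A` Chebyshev's bound turns the inequality at `σ = n` into
`c ^ n ∫_{c ≤ w} g ≤ A ^ n ∫ g`; since `∫ g < ∞` and `(A / c) ^ n → 0`, the mass of `g` on
`{c ≤ w}` is zero, and `{A < w}` is the countable union of these sets.
-/

open MeasureTheory Filter Topology
open scoped ENNReal

theorem ENNReal.eq_zero_of_eventually_pow_mul_le {a b x y : ℝ≥0∞} (hb : b ≠ ∞) (hxy : x < y)
    (hy : y ≠ ∞) (h : ∀ᶠ n : ℕ in atTop, y ^ n * a ≤ x ^ n * b) : a = 0 := by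
  have hy0 : y ≠ 0 := (pos_of_gt hxy).ne'
  have hratio : x / y < 1 := (ENNReal.div_lt_iff (.inl hy0) (.inl hy)).2 (by rwa [one_mul])
  have hdecay : Tendsto (fun n : ℕ => (x / y) ^ n * b) atTop (𝓝 0) := by
    simpa using ENNReal.Tendsto.mul_const
      (ENNReal.tendsto_pow_atTop_nhds_zero_of_lt_one hratio) (.inr hb)
  refine nonpos_iff_eq_zero.1 (ge_of_tendsto hdecay ?_)
  filter_upwards [h] with n hn
  rw [div_eq_mul_inv, mul_pow, ← ENNReal.inv_pow, mul_right_comm, ← div_eq_mul_inv]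
  exact (ENNReal.le_div_iff_mul_le (.inl (pow_ne_zero _ hy0)) (.inl (ENNReal.pow_ne_top hy))).2
    (by rwa [mul_comm])

theorem Filter.Eventually.imp_of_forall_lt {Ω : Type*} {l : Filter Ω} [CountableInterFilter l]
    {w : Ω → ℝ} {A : ℝ} {P : Ω → Prop} (h : ∀ c, A < c → ∀ᶠ x in l, c ≤ w x → P x) :
    ∀ᶠ x in l, A < w x → P x := by
  have hseq : ∀ᶠ x in l, ∀ n : ℕ, A + 1 / (n + 1) ≤ w x → P x :=
    eventually_countable_forall.2 fun n => h _ (lt_add_of_pos_right A Nat.one_div_pos_of_nat)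
  filter_upwards [hseq] with x hx hAx
  obtain ⟨n, hn⟩ := exists_nat_one_div_lt (sub_pos.2 hAx)
  exact hx n (by linarith)

section Bernstein

variable {Ω : Type*} [MeasurableSpace Ω] {μ : Measure Ω} {g : Ω → ℝ≥0∞} {w : Ω → ℝ}

theorem ofReal_rpow_mul_setLIntegral_le (hw : Measurable w) {c σ : ℝ} (hc : 0 ≤ c)
    (hσ : 0 ≤ σ) :
    ENNReal.ofReal (c ^ σ) * ∫⁻ x in {x | c ≤ w x}, g x ∂μ ≤
      ∫⁻ x, ENNReal.ofReal (w x ^ σ) * g x ∂μ :=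
  calc ENNReal.ofReal (c ^ σ) * ∫⁻ x in {x | c ≤ w x}, g x ∂μ
      = ∫⁻ x in {x | c ≤ w x}, ENNReal.ofReal (c ^ σ) * g x ∂μ :=
        (lintegral_const_mul' _ _ ENNReal.ofReal_ne_top).symm
    _ ≤ ∫⁻ x in {x | c ≤ w x}, ENNReal.ofReal (w x ^ σ) * g x ∂μ :=
        setLIntegral_mono' (measurableSet_le measurable_const hw) fun _ hx =>
          mul_le_mul_left (ENNReal.ofReal_le_ofReal (Real.rpow_le_rpow hc hx hσ)) _
    _ ≤ ∫⁻ x, ENNReal.ofReal (w x ^ σ) * g x ∂μ := setLIntegral_le_lintegral _ _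

theorem setLIntegral_eq_zero_of_forall_lintegral_rpow_mul_le (hw : Measurable w)
    (hgint : ∫⁻ x, g x ∂μ ≠ ∞) {A c : ℝ} (hA : 0 ≤ A) (hAc : A < c)
    (h : ∀ σ : ℝ, 0 < σ →
      ∫⁻ x, ENNReal.ofReal (w x ^ σ) * g x ∂μ ≤ ENNReal.ofReal (A ^ σ) * ∫⁻ x, g x ∂μ) :
    ∫⁻ x in {x | c ≤ w x}, g x ∂μ = 0 := by
  have hc : 0 ≤ c := hA.trans hAc.le
  refine ENNReal.eq_zero_of_eventually_pow_mul_le hgint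
    ((ENNReal.ofReal_lt_ofReal_iff_of_nonneg hA).2 hAc) ENNReal.ofReal_ne_top ?_
  filter_upwards [eventually_gt_atTop 0] with n hn
  have hσ : (0 : ℝ) < n := Nat.cast_pos.2 hn
  rw [← ENNReal.ofReal_pow hc, ← ENNReal.ofReal_pow hA, ← Real.rpow_natCast, ← Real.rpow_natCast]
  exact (ofReal_rpow_mul_setLIntegral_le hw hc hσ.le).trans (h n hσ)

theorem lintegral_rpow_mul_le_of_ae (hw0 : ∀ x, 0 ≤ w x) {A σ : ℝ} (hσ : 0 ≤ σ)
    (h : ∀ᵐ x ∂μ, A < w x → g x = 0) :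
    ∫⁻ x, ENNReal.ofReal (w x ^ σ) * g x ∂μ ≤ ENNReal.ofReal (A ^ σ) * ∫⁻ x, g x ∂μ :=
  calc ∫⁻ x, ENNReal.ofReal (w x ^ σ) * g x ∂μ
      ≤ ∫⁻ x, ENNReal.ofReal (A ^ σ) * g x ∂μ := by
        refine lintegral_mono_ae ?_
        filter_upwards [h] with x hx
        rcases le_or_gt (w x) A with hxA | hxA
        · exact mul_le_mul_left (ENNReal.ofReal_le_ofReal (Real.rpow_le_rpow (hw0 x) hxA hσ)) _
        · simp [hx hxA]
    _ = ENNReal.ofReal (A ^ σ) * ∫⁻ x, g x ∂μ := lintegral_const_mul' _ _ ENNReal.ofReal_ne_top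

end Bernstein

/-- Plancherel-side content of Theorem 3.1: the family of Bernstein inequalities
`∫ w^σ g ≤ A^σ ∫ g` for all `σ > 0` holds if and only if `g` vanishes a.e. on the set
where `w > A`. -/
theorem bernstein_iff_bandlimited {Ω : Type*} [MeasurableSpace Ω] (μ : Measure Ω)
    (g : Ω → ℝ≥0∞) (hg : Measurable g) (hgint : ∫⁻ x, g x ∂μ < ⊤)
    (w : Ω → ℝ) (hw : Measurable w) (hw0 : ∀ x, 0 ≤ w x)
    (A : ℝ) (hA : 0 ≤ A) :
    (∀ σ : ℝ, 0 < σ →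
        ∫⁻ x, ENNReal.ofReal (w x ^ σ) * g x ∂μ ≤
          ENNReal.ofReal (A ^ σ) * ∫⁻ x, g x ∂μ) ↔
      (∀ᵐ x ∂μ, A < w x → g x = 0) := by
  refine ⟨fun h => ?_, fun h σ hσ => lintegral_rpow_mul_le_of_ae hw0 hσ.le h⟩
  refine Eventually.imp_of_forall_lt fun c hAc => ?_
  exact (setLIntegral_eq_zero_iff (measurableSet_le measurable_const hw) hg).1
    (setLIntegral_eq_zero_of_forall_lintegral_rpow_mul_le hw hgint.ne hA hAc h)
end

section
/- Let (Ω, μ) be a measure space, let g, h : Ω → [0,∞) be measurable, let a > 0 and let s ≥ 0 be real. Assume ∫_Ω g dμ < ∞ and ∫_Ω h^{s+1} g dμ < ∞. If ∫_Ω g dμ ≤ a ∫_Ω h g dμ, then ∫_Ω h^s g dμ ≤ a ∫_Ω h^{s+1} g dμ. -/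
open MeasureTheory
open scoped ENNReal NNReal

/-! With `t = a h(x)`, the pointwise inequality `t ^ s + t ≤ t ^ (s + 1) + 1`, i.e.
`(t ^ s - 1) (t - 1) ≥ 0`, integrated against `g` gives
`a ^ s ∫ h ^ s g + a ∫ h g ≤ a ^ (s + 1) ∫ h ^ (s + 1) g + ∫ g`. Bounding `∫ g` by `a ∫ h g`
and cancelling this finite term (`h ≤ h ^ (s + 1) + 1` makes it finite) leaves the claim
multiplied by `a ^ s`. -/

theorem NNReal.rpow_add_le_rpow_add_one_add_one (t : ℝ≥0) {s : ℝ} (hs : 0 ≤ s) :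
    t ^ s + t ≤ t ^ (s + 1) + 1 := by
  rw [NNReal.rpow_add_of_nonneg t hs zero_le_one, NNReal.rpow_one]
  rcases le_total t 1 with ht | ht
  · simpa using mul_add_mul_le_mul_add_mul (NNReal.rpow_le_one ht hs) ht
  · simpa [add_comm] using mul_add_mul_le_mul_add_mul (NNReal.one_le_rpow ht hs) ht

theorem ENNReal.rpow_add_le_rpow_add_one_add_one (t : ℝ≥0∞) {s : ℝ} (hs : 0 ≤ s) :
    t ^ s + t ≤ t ^ (s + 1) + 1 := by
  induction t using ENNReal.recTopCoe with
  | top => simp [ENNReal.top_rpow_of_pos (by linarith : 0 < s + 1)]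
  | coe t =>
    rw [← ENNReal.coe_rpow_of_nonneg t hs, ← ENNReal.coe_rpow_of_nonneg t (by linarith)]
    exact_mod_cast t.rpow_add_le_rpow_add_one_add_one hs

theorem lintegral_rpow_mul_add_lintegral_mul_le {Ω : Type*} [MeasurableSpace Ω] (μ : Measure Ω)
    (f : Ω → ℝ≥0∞) {g : Ω → ℝ≥0∞} (hg : AEMeasurable g μ) {c : ℝ≥0∞} (hc : c ≠ ⊤)
    {s : ℝ} (hs : 0 ≤ s) :
    c ^ s * ∫⁻ x, f x ^ s * g x ∂μ + c * ∫⁻ x, f x * g x ∂μ ≤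
      c ^ (s + 1) * ∫⁻ x, f x ^ (s + 1) * g x ∂μ + ∫⁻ x, g x ∂μ := by
  have hcs : ∀ r : ℝ, 0 ≤ r → c ^ r ≠ ⊤ := fun r hr => ENNReal.rpow_ne_top_of_nonneg hr hc
  calc c ^ s * ∫⁻ x, f x ^ s * g x ∂μ + c * ∫⁻ x, f x * g x ∂μ
      = ∫⁻ x, c ^ s * (f x ^ s * g x) ∂μ + ∫⁻ x, c * (f x * g x) ∂μ := by
        rw [lintegral_const_mul' _ _ (hcs s hs), lintegral_const_mul' _ _ hc]
    _ ≤ ∫⁻ x, c ^ s * (f x ^ s * g x) + c * (f x * g x) ∂μ := le_lintegral_add _ _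
    _ ≤ ∫⁻ x, c ^ (s + 1) * (f x ^ (s + 1) * g x) + g x ∂μ := lintegral_mono fun x => by
        simpa only [ENNReal.mul_rpow_of_nonneg _ _ hs, add_mul, one_mul, mul_assoc,
          ENNReal.mul_rpow_of_nonneg _ _ (by linarith : 0 ≤ s + 1)] using
          mul_le_mul_left (ENNReal.rpow_add_le_rpow_add_one_add_one (c * f x) hs) (g x)
    _ = c ^ (s + 1) * ∫⁻ x, f x ^ (s + 1) * g x ∂μ + ∫⁻ x, g x ∂μ := by
        rw [lintegral_add_right' _ hg, lintegral_const_mul' _ _ (hcs _ (by linarith))]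

theorem lintegral_rpow_mul_le_of_le_general {Ω : Type*} [MeasurableSpace Ω] (μ : Measure Ω)
    (g h : Ω → ℝ≥0) (hgm : Measurable g)
    (a : ℝ) (ha : 0 < a) (s : ℝ) (hs : 0 ≤ s)
    (hgint : ∫⁻ x, (g x : ℝ≥0∞) ∂μ < ⊤)
    (hint : ∫⁻ x, (h x : ℝ≥0∞) ^ (s + 1) * g x ∂μ < ⊤)
    (hyp : ∫⁻ x, (g x : ℝ≥0∞) ∂μ ≤ ENNReal.ofReal a * ∫⁻ x, (h x : ℝ≥0∞) * g x ∂μ) :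
    ∫⁻ x, (h x : ℝ≥0∞) ^ s * g x ∂μ ≤
      ENNReal.ofReal a * ∫⁻ x, (h x : ℝ≥0∞) ^ (s + 1) * g x ∂μ := by
  have hg : AEMeasurable (fun x => (g x : ℝ≥0∞)) μ := hgm.coe_nnreal_ennreal.aemeasurable
  set c := ENNReal.ofReal a
  have hc0 : 0 < c := ENNReal.ofReal_pos.mpr ha
  have hc : c ≠ ⊤ := ENNReal.ofReal_ne_top
  have hhg_ne_top : ∫⁻ x, (h x : ℝ≥0∞) * g x ∂μ ≠ ⊤ := by
    have := lintegral_rpow_mul_add_lintegral_mul_le μ (fun x => h x) hg ENNReal.one_ne_top hs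
    simp only [ENNReal.one_rpow, one_mul] at this
    exact ne_top_of_le_ne_top (ENNReal.add_ne_top.2 ⟨hint.ne, hgint.ne⟩) (le_add_self.trans this)
  have key := (lintegral_rpow_mul_add_lintegral_mul_le μ (fun x => h x) hg hc hs).trans
    (add_le_add_right hyp _)
  rw [ENNReal.rpow_add_of_nonneg s 1 hs zero_le_one, ENNReal.rpow_one, mul_assoc,
    ENNReal.add_le_add_iff_right (ENNReal.mul_ne_top hc hhg_ne_top)] at key
  exact (ENNReal.mul_le_mul_iff_right (ENNReal.rpow_pos hc0 hc).ne'
    (ENNReal.rpow_ne_top_of_nonneg hs hc)).1 key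

/-- Key step of Lemma 6.2: if `∫ g ≤ a ∫ h g`, then for every `s ≥ 0`
`∫ h^s g ≤ a ∫ h^{s+1} g`. -/
theorem lintegral_rpow_mul_le_of_le {Ω : Type*} [MeasurableSpace Ω] (μ : Measure Ω)
    (g h : Ω → ℝ≥0) (hgm : Measurable g) (hhm : Measurable h)
    (a : ℝ) (ha : 0 < a) (s : ℝ) (hs : 0 ≤ s)
    (hgint : ∫⁻ x, (g x : ℝ≥0∞) ∂μ < ⊤)
    (hint : ∫⁻ x, (h x : ℝ≥0∞) ^ (s + 1) * g x ∂μ < ⊤)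
    (hyp : ∫⁻ x, (g x : ℝ≥0∞) ∂μ ≤ ENNReal.ofReal a * ∫⁻ x, (h x : ℝ≥0∞) * g x ∂μ) :
    ∫⁻ x, (h x : ℝ≥0∞) ^ s * g x ∂μ ≤
      ENNReal.ofReal a * ∫⁻ x, (h x : ℝ≥0∞) ^ (s + 1) * g x ∂μ :=
  lintegral_rpow_mul_le_of_le_general μ g h hgm a ha s hs hgint hint hyp
end

section
/- Let (Ω, μ) be a measure space, let g, h : Ω → [0,∞) be measurable, let a > 0, σ > 0, s ≥ 0 be real, let l be a natural number and put m = 2^l. Assume ∫_Ω g dμ < ∞ and ∫_Ω h^{mσ+s} g dμ < ∞. If ∫_Ω g dμ ≤ a ∫_Ω h^σ g dμ, then ∫_Ω h^s g dμ ≤ a^m ∫_Ω h^{mσ+s} g dμ. -/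
open MeasureTheory
open scoped ENNReal NNReal

/-!
Write `J t = ∫ h^t g`. Hölder's inequality makes `t ↦ J t` log-convex, so
`J t * J σ ≤ J 0 * J (t + σ)`; combined with `J 0 ≤ a * J σ` and cancelling the finite factor
`J σ` this gives `J t ≤ a * J (t + σ)` for every `t ≥ 0`, which is iterated `m` times starting
from `t = s`.
-/

section WeightedMoments

variable {α : Type*} [MeasurableSpace α] {μ : Measure α} {f w : α → ℝ≥0∞}

theorem lintegral_rpow_mul_le_rpow_mul_rpow (hf : AEMeasurable f μ) (hw : AEMeasurable w μ)
    {r θ : ℝ} (hθ₀ : 0 ≤ θ) (hθ₁ : θ ≤ 1) :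
    ∫⁻ x, f x ^ (θ * r) * w x ∂μ ≤
      (∫⁻ x, f x ^ r * w x ∂μ) ^ θ * (∫⁻ x, w x ∂μ) ^ (1 - θ) := by
  calc ∫⁻ x, f x ^ (θ * r) * w x ∂μ
      = ∫⁻ x, (f x ^ r * w x) ^ θ * w x ^ (1 - θ) ∂μ := by
        refine lintegral_congr fun x => ?_
        rw [ENNReal.mul_rpow_of_nonneg _ _ hθ₀, ← ENNReal.rpow_mul, mul_assoc,
          ← ENNReal.rpow_add_of_nonneg _ _ hθ₀ (sub_nonneg.2 hθ₁), add_sub_cancel,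
          ENNReal.rpow_one, mul_comm r]
    _ ≤ _ := ENNReal.lintegral_mul_norm_pow_le ((hf.pow_const r).mul hw) hw hθ₀
        (sub_nonneg.2 hθ₁) (add_sub_cancel _ _)

theorem lintegral_rpow_mul_mul_lintegral_rpow_mul_le (hf : AEMeasurable f μ)
    (hw : AEMeasurable w μ) {t σ : ℝ} (ht : 0 ≤ t) (hσ : 0 ≤ σ) :
    (∫⁻ x, f x ^ t * w x ∂μ) * ∫⁻ x, f x ^ σ * w x ∂μ ≤
      (∫⁻ x, w x ∂μ) * ∫⁻ x, f x ^ (t + σ) * w x ∂μ := by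
  rcases (add_nonneg ht hσ).eq_or_lt with hr | hr
  · obtain ⟨rfl, rfl⟩ : t = 0 ∧ σ = 0 := ⟨by linarith, by linarith⟩
    simp
  set θ := t / (t + σ)
  have hθ₀ : 0 ≤ θ := div_nonneg ht hr.le
  have hθ₁ : θ ≤ 1 := div_le_one_of_le₀ (by linarith) hr.le
  have htθ : t = θ * (t + σ) := (div_mul_cancel₀ t hr.ne').symm
  have hσθ : σ = (1 - θ) * (t + σ) := by rw [sub_mul, one_mul, ← htθ]; ring
  set J := ∫⁻ x, f x ^ (t + σ) * w x ∂μ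
  set J₀ := ∫⁻ x, w x ∂μ
  have hJt := lintegral_rpow_mul_le_rpow_mul_rpow hf hw (r := t + σ) hθ₀ hθ₁
  have hJσ := lintegral_rpow_mul_le_rpow_mul_rpow hf hw (r := t + σ) (sub_nonneg.2 hθ₁)
    (sub_le_self 1 hθ₀)
  rw [← htθ] at hJt
  rw [← hσθ, sub_sub_cancel] at hJσ
  calc _ ≤ (J ^ θ * J₀ ^ (1 - θ)) * (J ^ (1 - θ) * J₀ ^ θ) := mul_le_mul' hJt hJσ
    _ = J₀ * J := by
        rw [mul_mul_mul_comm, ← ENNReal.rpow_add_of_nonneg _ _ hθ₀ (sub_nonneg.2 hθ₁),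
          ← ENNReal.rpow_add_of_nonneg _ _ (sub_nonneg.2 hθ₁) hθ₀, add_sub_cancel,
          sub_add_cancel, ENNReal.rpow_one, ENNReal.rpow_one, mul_comm]

theorem lintegral_rpow_mul_le_lintegral_add (hw : AEMeasurable w μ) {p r : ℝ} (hp : 0 ≤ p)
    (hpr : p ≤ r) :
    ∫⁻ x, f x ^ p * w x ∂μ ≤ (∫⁻ x, w x ∂μ) + ∫⁻ x, f x ^ r * w x ∂μ := by
  have hpow : ∀ x, f x ^ p ≤ 1 + f x ^ r := fun x => by
    rcases le_total (f x) 1 with hx | hx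
    · exact (ENNReal.rpow_le_one hx hp).trans le_self_add
    · exact (ENNReal.rpow_le_rpow_of_exponent_le hx hpr).trans le_add_self
  calc ∫⁻ x, f x ^ p * w x ∂μ ≤ ∫⁻ x, w x + f x ^ r * w x ∂μ :=
        lintegral_mono fun x => by grw [hpow x, add_mul, one_mul]
    _ = _ := lintegral_add_left' hw _

theorem lintegral_rpow_mul_le_mul_lintegral_rpow_add_mul (hf : AEMeasurable f μ)
    (hw : AEMeasurable w μ) {c : ℝ≥0∞} {σ : ℝ} (hσ : 0 ≤ σ)
    (hσ_top : ∫⁻ x, f x ^ σ * w x ∂μ ≠ ⊤)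
    (hle : ∫⁻ x, w x ∂μ ≤ c * ∫⁻ x, f x ^ σ * w x ∂μ) {t : ℝ} (ht : 0 ≤ t) :
    ∫⁻ x, f x ^ t * w x ∂μ ≤ c * ∫⁻ x, f x ^ (t + σ) * w x ∂μ := by
  by_cases hσ_zero : ∫⁻ x, f x ^ σ * w x ∂μ = 0
  · have hw_zero : w =ᵐ[μ] 0 := (lintegral_eq_zero_iff' hw).1 <| by simpa [hσ_zero] using hle
    have : ∫⁻ x, f x ^ t * w x ∂μ = 0 := by
      rw [← lintegral_zero]
      exact lintegral_congr_ae <| hw_zero.mono fun x hx => by simp [hx]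
    simp [this]
  refine (ENNReal.mul_le_mul_iff_left hσ_zero hσ_top).1 ?_
  calc (∫⁻ x, f x ^ t * w x ∂μ) * ∫⁻ x, f x ^ σ * w x ∂μ
      ≤ (∫⁻ x, w x ∂μ) * ∫⁻ x, f x ^ (t + σ) * w x ∂μ :=
        lintegral_rpow_mul_mul_lintegral_rpow_mul_le hf hw ht hσ
    _ ≤ (c * ∫⁻ x, f x ^ σ * w x ∂μ) * ∫⁻ x, f x ^ (t + σ) * w x ∂μ := by gcongr
    _ = _ := by ring

end WeightedMoments

theorem ENNReal.le_pow_mul_of_forall_le_mul_add {J : ℝ → ℝ≥0∞} {c : ℝ≥0∞} {σ s : ℝ}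
    (hσ : 0 ≤ σ) (hs : 0 ≤ s) (hJ : ∀ t, 0 ≤ t → J t ≤ c * J (t + σ)) (n : ℕ) :
    J s ≤ c ^ n * J (n * σ + s) := by
  induction n with
  | zero => simp
  | succ n ih =>
    calc J s ≤ c ^ n * J (n * σ + s) := ih
      _ ≤ c ^ n * (c * J (n * σ + s + σ)) := by gcongr; exact hJ _ (by positivity)
      _ = c ^ (n + 1) * J ((n + 1 : ℕ) * σ + s) := by
        rw [← mul_assoc, ← pow_succ]; push_cast; ring_nf

theorem lintegral_rpow_mul_le_pow_of_le_general {Ω : Type*} [MeasurableSpace Ω] (μ : Measure Ω)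
    (g h : Ω → ℝ≥0) (hgm : Measurable g) (hhm : Measurable h)
    (a : ℝ) (σ : ℝ) (hσ : 0 < σ) (s : ℝ) (hs : 0 ≤ s)
    (m : ℕ)
    (hgint : ∫⁻ x, (g x : ℝ≥0∞) ∂μ < ⊤)
    (hint : ∫⁻ x, (h x : ℝ≥0∞) ^ ((m : ℝ) * σ + s) * g x ∂μ < ⊤)
    (hyp : ∫⁻ x, (g x : ℝ≥0∞) ∂μ ≤ ENNReal.ofReal a * ∫⁻ x, (h x : ℝ≥0∞) ^ σ * g x ∂μ) :
    ∫⁻ x, (h x : ℝ≥0∞) ^ s * g x ∂μ ≤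
      ENNReal.ofReal a ^ m * ∫⁻ x, (h x : ℝ≥0∞) ^ ((m : ℝ) * σ + s) * g x ∂μ := by
  rcases Nat.eq_zero_or_pos m with rfl | hm
  · simp
  have hf := hhm.coe_nnreal_ennreal.aemeasurable (μ := μ)
  have hw := hgm.coe_nnreal_ennreal.aemeasurable (μ := μ)
  have hσ_le : σ ≤ m * σ + s := by
    nlinarith [show (1 : ℝ) ≤ m by exact_mod_cast hm]
  have hσ_top : ∫⁻ x, (h x : ℝ≥0∞) ^ σ * g x ∂μ ≠ ⊤ :=
    (lintegral_rpow_mul_le_lintegral_add hw hσ.le hσ_le).trans_lt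
      (ENNReal.add_lt_top.2 ⟨hgint, hint⟩) |>.ne
  exact ENNReal.le_pow_mul_of_forall_le_mul_add hσ.le hs
    (fun t ht => lintegral_rpow_mul_le_mul_lintegral_rpow_add_mul hf hw hσ.le hσ_top hyp ht) m

/-- Plancherel-side form of Lemma 6.2: if `∫ g ≤ a ∫ h^σ g`, then for every `s ≥ 0`
and `m = 2^l` one has `∫ h^s g ≤ a^m ∫ h^{mσ+s} g`. -/
theorem lintegral_rpow_mul_le_pow_of_le {Ω : Type*} [MeasurableSpace Ω] (μ : Measure Ω)
    (g h : Ω → ℝ≥0) (hgm : Measurable g) (hhm : Measurable h)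
    (a : ℝ) (ha : 0 < a) (σ : ℝ) (hσ : 0 < σ) (s : ℝ) (hs : 0 ≤ s)
    (l : ℕ) (m : ℕ) (hm : m = 2 ^ l)
    (hgint : ∫⁻ x, (g x : ℝ≥0∞) ∂μ < ⊤)
    (hint : ∫⁻ x, (h x : ℝ≥0∞) ^ ((m : ℝ) * σ + s) * g x ∂μ < ⊤)
    (hyp : ∫⁻ x, (g x : ℝ≥0∞) ∂μ ≤ ENNReal.ofReal a * ∫⁻ x, (h x : ℝ≥0∞) ^ σ * g x ∂μ) :
    ∫⁻ x, (h x : ℝ≥0∞) ^ s * g x ∂μ ≤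
      ENNReal.ofReal a ^ m * ∫⁻ x, (h x : ℝ≥0∞) ^ ((m : ℝ) * σ + s) * g x ∂μ :=
  lintegral_rpow_mul_le_pow_of_le_general μ g h hgm hhm a σ hσ s hs m hgint hint hyp
end

section
/- Let τ > 0 and E > 0. Let S : ℝ → ℝ be continuous on [0, τ], positive on (0, τ], and nondecreasing on [0, τ]. Let Φ : ℝ → ℂ be continuous on [0, τ] with Φ(0) = 1 and |Φ(t)| ≤ 1 for all t ∈ [0, τ], differentiable on (0, τ), and suppose that for every σ ∈ (0, τ), S(σ) Φ′(σ) = −E ∫₀^σ S(γ) Φ(γ) dγ. Then |1 − Φ(τ)| ≤ E τ² / 2. -/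
open MeasureTheory intervalIntegral Set

/-!
Since `S` is nondecreasing and `|Φ| ≤ 1`, the radial equation gives
`S σ ‖Φ' σ‖ ≤ E ∫₀^σ S ≤ E σ S σ`, i.e. `‖Φ' σ‖ ≤ E σ`. Comparing `Φ` with the
boundary function `E t² / 2`, whose derivative is `E t`, yields
`‖Φ τ - Φ 0‖ ≤ E τ² / 2`.
-/

theorem norm_sub_le_of_norm_hasDerivAt_le_deriv_boundary {F : Type*} [NormedAddCommGroup F]
    [NormedSpace ℝ F] {f f' : ℝ → F} {B B' : ℝ → ℝ} {a b : ℝ} (hab : a ≤ b)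
    (hf : ContinuousOn f (Icc a b)) (hf' : ∀ x ∈ Ioo a b, HasDerivAt f (f' x) x)
    (hB : ContinuousOn B (Icc a b)) (hB' : ∀ x ∈ Ioo a b, HasDerivAt B (B' x) x)
    (bound : ∀ x ∈ Ioo a b, ‖f' x‖ ≤ B' x) :
    ‖f b - f a‖ ≤ B b - B a := by
  rcases hab.eq_or_lt with rfl | hab
  · simp
  -- Mathlib's fencing theorem needs a right derivative at the left endpoint, so apply it on
  -- `[c, b]` for `c > a` and let `c` tend to `a`.
  have from_interior : ∀ c ∈ Ioc a b, ‖f b - f c‖ ≤ B b - B c := by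
    intro c hc
    have hsub : Icc c b ⊆ Icc a b := Icc_subset_Icc hc.1.le le_rfl
    have hIco : ∀ x ∈ Ico c b, x ∈ Ioo a b := fun x hx => ⟨hc.1.trans_le hx.1, hx.2⟩
    refine image_norm_le_of_norm_deriv_right_le_deriv_boundary'
      (f := fun x => f x - f c) (B := fun x => B x - B c)
      ((hf.mono hsub).sub continuousOn_const)
      (fun x hx => ((hf' x (hIco x hx)).sub_const _).hasDerivWithinAt)
      (by simp) ((hB.mono hsub).sub continuousOn_const)
      (fun x hx => ((hB' x (hIco x hx)).sub_const _).hasDerivWithinAt)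
      (fun x hx => bound x (hIco x hx)) ⟨hc.2, le_rfl⟩
  have hclosure : closure (Ioc a b) = Icc a b := closure_Ioc hab.ne
  refine le_on_closure (f := fun c => ‖f b - f c‖) (g := fun c => B b - B c) from_interior
    ?_ ?_ (hclosure ▸ left_mem_Icc.2 hab.le)
  · rw [hclosure]; exact (continuousOn_const.sub hf).norm
  · rw [hclosure]; exact continuousOn_const.sub hB

theorem norm_integral_ofReal_mul_le_of_monotoneOn {S : ℝ → ℝ} {Φ : ℝ → ℂ} {σ : ℝ} (hσ : 0 < σ)
    (hS : ∀ t ∈ Ioc 0 σ, 0 ≤ S t) (hSmono : MonotoneOn S (Ioc 0 σ))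
    (hΦ : ∀ t ∈ Ioc 0 σ, ‖Φ t‖ ≤ 1) :
    ‖∫ γ in (0 : ℝ)..σ, (S γ : ℂ) * Φ γ‖ ≤ S σ * σ := by
  have hσmem : σ ∈ Ioc 0 σ := ⟨hσ, le_rfl⟩
  have bound : ∀ γ ∈ uIoc 0 σ, ‖(S γ : ℂ) * Φ γ‖ ≤ S σ := by
    intro γ hγ
    rw [uIoc_of_le hσ.le] at hγ
    calc ‖(S γ : ℂ) * Φ γ‖ = S γ * ‖Φ γ‖ := by
          rw [norm_mul, Complex.norm_real, Real.norm_of_nonneg (hS γ hγ)]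
      _ ≤ S γ * 1 := mul_le_mul_of_nonneg_left (hΦ γ hγ) (hS γ hγ)
      _ ≤ S σ := by rw [mul_one]; exact hSmono hγ hσmem hγ.2
  simpa [abs_of_pos hσ] using norm_integral_le_of_norm_le_const bound

theorem norm_le_of_radial_eq {S : ℝ → ℝ} {Φ : ℝ → ℂ} {E σ : ℝ} {z : ℂ} (hE : 0 ≤ E)
    (hσ : 0 < σ) (hSpos : ∀ t ∈ Ioc 0 σ, 0 < S t) (hSmono : MonotoneOn S (Ioc 0 σ))
    (hΦ : ∀ t ∈ Ioc 0 σ, ‖Φ t‖ ≤ 1)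
    (hz : (S σ : ℂ) * z = -(E : ℂ) * ∫ γ in (0 : ℝ)..σ, (S γ : ℂ) * Φ γ) :
    ‖z‖ ≤ E * σ := by
  have hSσ : 0 < S σ := hSpos σ ⟨hσ, le_rfl⟩
  have hnorm : S σ * ‖z‖ = E * ‖∫ γ in (0 : ℝ)..σ, (S γ : ℂ) * Φ γ‖ := by
    simpa [Complex.norm_real, abs_of_pos hSσ, abs_of_nonneg hE] using congrArg norm hz
  refine le_of_mul_le_mul_left ?_ hSσ
  calc S σ * ‖z‖ = E * ‖∫ γ in (0 : ℝ)..σ, (S γ : ℂ) * Φ γ‖ := hnorm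
    _ ≤ E * (S σ * σ) := mul_le_mul_of_nonneg_left
        (norm_integral_ofReal_mul_le_of_monotoneOn hσ (fun t ht => (hSpos t ht).le)
          hSmono hΦ) hE
    _ = S σ * (E * σ) := by ring

theorem radial_eigenfunction_estimate_general (τ E : ℝ) (hτ : 0 < τ) (hE : 0 < E)
    (S : ℝ → ℝ)
    (hSpos : ∀ t ∈ Ioc 0 τ, 0 < S t) (hSmono : MonotoneOn S (Icc 0 τ))
    (Φ : ℝ → ℂ) (hΦcont : ContinuousOn Φ (Icc 0 τ))
    (hΦ0 : Φ 0 = 1) (hΦle : ∀ t ∈ Icc 0 τ, ‖Φ t‖ ≤ 1)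
    (hΦdiff : ∀ σ ∈ Ioo 0 τ, DifferentiableAt ℝ Φ σ)
    (hODE : ∀ σ ∈ Ioo 0 τ,
      (S σ : ℂ) * deriv Φ σ = -(E : ℂ) * ∫ γ in (0:ℝ)..σ, (S γ : ℂ) * Φ γ) :
    ‖1 - Φ τ‖ ≤ E * τ ^ 2 / 2 := by
  have hderiv : ∀ σ ∈ Ioo 0 τ, ‖deriv Φ σ‖ ≤ E * σ := fun σ hσ =>
    have hsub : Ioc 0 σ ⊆ Icc 0 τ := Ioc_subset_Icc_self.trans (Icc_subset_Icc le_rfl hσ.2.le)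
    norm_le_of_radial_eq hE.le hσ.1 (fun t ht => hSpos t ⟨ht.1, ht.2.trans hσ.2.le⟩)
      (hSmono.mono hsub) (fun t ht => hΦle t (hsub ht)) (hODE σ hσ)
  have hquad : ∀ x : ℝ, HasDerivAt (fun t => E * t ^ 2 / 2) (E * x) x := fun x =>
    (((hasDerivAt_pow 2 x).const_mul E).div_const 2).congr_deriv (by ring)
  have key := norm_sub_le_of_norm_hasDerivAt_le_deriv_boundary hτ.le hΦcont
    (fun σ hσ => (hΦdiff σ hσ).hasDerivAt) (fun x _ => (hquad x).continuousAt.continuousWithinAt)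
    (fun x _ => hquad x) hderiv
  rw [norm_sub_rev, ← hΦ0]
  simpa using key

/-- The analytic heart of Theorem 7.3 (estimate (7.7)): if `Φ` is a radial
eigenfunction-type profile, i.e. `Φ 0 = 1`, `|Φ| ≤ 1` on `[0, τ]`, and
`S σ * Φ' σ = -E ∫₀^σ S γ * Φ γ dγ` on `(0, τ)` for a continuous, positive,
nondecreasing surface-area function `S`, then `|1 - Φ τ| ≤ E τ² / 2`. -/
theorem radial_eigenfunction_estimate (τ E : ℝ) (hτ : 0 < τ) (hE : 0 < E)
    (S : ℝ → ℝ) (hScont : ContinuousOn S (Icc 0 τ))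
    (hSpos : ∀ t ∈ Ioc 0 τ, 0 < S t) (hSmono : MonotoneOn S (Icc 0 τ))
    (Φ : ℝ → ℂ) (hΦcont : ContinuousOn Φ (Icc 0 τ))
    (hΦ0 : Φ 0 = 1) (hΦle : ∀ t ∈ Icc 0 τ, ‖Φ t‖ ≤ 1)
    (hΦdiff : ∀ σ ∈ Ioo 0 τ, DifferentiableAt ℝ Φ σ)
    (hODE : ∀ σ ∈ Ioo 0 τ,
      (S σ : ℂ) * deriv Φ σ = -(E : ℂ) * ∫ γ in (0:ℝ)..σ, (S γ : ℂ) * Φ γ) :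
    ‖1 - Φ τ‖ ≤ E * τ ^ 2 / 2 :=
  radial_eigenfunction_estimate_general τ E hτ hE S hSpos hSmono Φ hΦcont hΦ0 hΦle hΦdiff hODE
end

section
/- Let d ≥ 1, let ω > 0, and write B̄(0, ω) for the closed ball of radius ω centered at 0 in ℝ^d. For g ∈ L²(B̄(0, ω)) define e_g : ℝ^d → ℂ by e_g(x) = ∫_{B̄(0,ω)} g(ξ) e^{i⟨x, ξ⟩} dξ (the integral converges absolutely since g ∈ L¹(B̄(0, ω))). Then for every open ball U ⊆ ℝ^d, the set of restrictions {e_g|_U : g ∈ L²(B̄(0, ω))} is dense in L²(U): for every h ∈ L²(U) and every ε > 0 there exists g ∈ L²(B̄(0, ω)) with ∫_U |h(x) − e_g(x)|² dx < ε². -/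
/-!
If `ψ ∈ L²(U)` is orthogonal to every `e_g`, Fubini turns this into `∫_{B̄(0,ω)} g F = 0` for
all `g ∈ L²(B̄(0,ω))`, where `F ξ = ∫_U conj (ψ x) e^{i⟨ξ,x⟩} dx`. Taking `g = conj F` shows that
the continuous function `F` vanishes on the ball, hence near `0`. As `U` is bounded, `F` restricted
to a line through `0` extends to an entire function, so `F = 0` by the identity theorem, and the
injectivity of the Fourier transform on `L¹` gives `ψ = 0`.
-/

open MeasureTheory Filter Topology Complex Metric Set
open scoped RealInnerProductSpace FourierTransform SchwartzMap ComplexConjugate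

theorem differentiable_integral_mul_cexp {X : Type*} [MeasurableSpace X] {μ : Measure X}
    {f : X → ℂ} {a : X → ℝ} {C : ℝ} (hf : Integrable f μ) (ha : AEStronglyMeasurable a μ)
    (haC : ∀ᵐ x ∂μ, |a x| ≤ C) :
    Differentiable ℂ fun z : ℂ ↦ ∫ x, f x * cexp (z * a x) ∂μ := by
  have hmeas : ∀ z : ℂ, AEStronglyMeasurable (fun x ↦ cexp (z * a x)) μ := fun z ↦
    (continuous_exp.comp (continuous_const.mul continuous_ofReal)).comp_aestronglyMeasurable ha
  intro z₀
  have hexp_le : ∀ z ∈ ball z₀ 1, ∀ x, |a x| ≤ C →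
      ‖cexp (z * a x)‖ ≤ Real.exp ((‖z₀‖ + 1) * C) := by
    intro z hz x hx
    refine (norm_exp_le_exp_norm _).trans (Real.exp_le_exp.2 ?_)
    rw [norm_mul, norm_real, Real.norm_eq_abs]
    have : ‖z‖ ≤ ‖z₀‖ + 1 := by
      have := norm_le_norm_add_norm_sub' z z₀
      rw [mem_ball, dist_eq_norm] at hz
      linarith
    exact mul_le_mul this hx (abs_nonneg _) (by positivity)
  refine (hasDerivAt_integral_of_dominated_loc_of_deriv_le (ball_mem_nhds z₀ one_pos)
    (F' := fun z x ↦ f x * (a x * cexp (z * a x)))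
    (bound := fun x ↦ ‖f x‖ * (C * Real.exp ((‖z₀‖ + 1) * C)))
    (Eventually.of_forall fun z ↦ hf.1.mul (hmeas z))
    (hf.mul_bdd (hmeas z₀) (haC.mono fun x hx ↦ hexp_le z₀ (mem_ball_self one_pos) x hx))
    (hf.1.mul ((continuous_ofReal.comp_aestronglyMeasurable ha).mul (hmeas z₀)))
    ?_ (hf.norm.mul_const _) ?_).2.differentiableAt
  · filter_upwards [haC] with x hx z hz
    rw [norm_mul, norm_mul, norm_real, Real.norm_eq_abs]
    gcongr
    · exact (abs_nonneg _).trans hx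
    · exact hexp_le z hz x hx
  · refine Eventually.of_forall fun x z _ ↦ ?_
    simpa [mul_comm] using (hasDerivAt_mul_const (a x : ℂ)).cexp.const_mul (f x)

theorem eventuallyEq_of_ae_restrict_eq {X Y : Type*} [TopologicalSpace X] [MeasurableSpace X]
    [TopologicalSpace Y] [T2Space Y] {μ : Measure X} [μ.IsOpenPosMeasure] {s : Set X} {x : X}
    {f g : X → Y} (hf : Continuous f) (hg : Continuous g) (hfg : f =ᵐ[μ.restrict s] g)
    (hs : s ∈ 𝓝 x) : f =ᶠ[𝓝 x] g :=
  eventually_of_mem (interior_mem_nhds.2 hs) <| Measure.eqOn_open_of_ae_eq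
    (ae_restrict_of_ae_restrict_of_subset interior_subset hfg) isOpen_interior
    hf.continuousOn hg.continuousOn

theorem ae_eq_zero_of_forall_integral_mul_eq_zero {X : Type*} [MeasurableSpace X]
    {μ : Measure X} {F : X → ℂ} (hF : MemLp F 2 μ)
    (h : ∀ g, MemLp g 2 μ → ∫ x, F x * g x ∂μ = 0) : F =ᵐ[μ] 0 := by
  have hself : inner ℂ (hF.toLp F) (hF.toLp F) = 0 := by
    rw [L2.inner_def, ← h _ hF.star]
    refine integral_congr_ae ?_
    filter_upwards [hF.coeFn_toLp] with x hx
    rw [hx, RCLike.inner_apply]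
    rfl
  exact hF.coeFn_toLp.symm.trans (Lp.eq_zero_iff_ae_eq_zero.1 (inner_self_eq_zero.1 hself))

theorem MeasureTheory.Lp.norm_sq_eq_integral {X E : Type*} [MeasurableSpace X] {μ : Measure X}
    [NormedAddCommGroup E] (f : Lp E 2 μ) : ‖f‖ ^ 2 = ∫ x, ‖f x‖ ^ 2 ∂μ := by
  have hint : 0 ≤ ∫ x, ‖f x‖ ^ (2 : ℝ) ∂μ := integral_nonneg fun x ↦ by positivity
  rw [Lp.norm_def, (Lp.memLp f).eLpNorm_eq_integral_rpow_norm two_ne_zero ENNReal.ofNat_ne_top,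
    ENNReal.toReal_ofReal (by positivity), ENNReal.toReal_ofNat, ← Real.rpow_natCast,
    ← Real.rpow_mul hint]
  norm_num

variable {V : Type*} [NormedAddCommGroup V] [InnerProductSpace ℝ V]

theorem continuous_neg_innerₗ : Continuous fun p : V × V ↦ (-innerₗ V) p.1 p.2 := by
  simp only [LinearMap.neg_apply, innerₗ_apply_apply]
  exact (continuous_fst.inner continuous_snd).neg

variable [MeasurableSpace V]

/-- `expTransform (volume.restrict (closedBall 0 ω)) g` is the band-limited function `e_g`. -/
noncomputable def expTransform (μ : Measure V) (f : V → ℂ) (ξ : V) : ℂ :=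
  ∫ x, f x * cexp (I * ⟪ξ, x⟫) ∂μ

theorem expTransform_eq_fourierIntegral (μ : Measure V) (f : V → ℂ) :
    expTransform μ f = VectorFourier.fourierIntegral Real.probChar μ (-innerₗ V) f := by
  funext ξ
  rw [VectorFourier.fourierIntegral_probChar, expTransform]
  congr 1 with x
  simp [real_inner_comm, mul_comm]

theorem norm_expTransform_le (μ : Measure V) (f : V → ℂ) (ξ : V) :
    ‖expTransform μ f ξ‖ ≤ ∫ x, ‖f x‖ ∂μ := by
  rw [expTransform_eq_fourierIntegral]
  exact VectorFourier.norm_fourierIntegral_le_integral_norm _ _ _ _ _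

theorem expTransform_smul (μ : Measure V) (c : ℂ) (f : V → ℂ) :
    expTransform μ (c • f) = c • expTransform μ f := by
  simp only [expTransform_eq_fourierIntegral]
  exact VectorFourier.fourierIntegral_const_smul _ _ _ _ _

theorem expTransform_restrict (μ : Measure V) {s : Set V} (hs : MeasurableSet s) (f : V → ℂ) :
    expTransform (μ.restrict s) f = expTransform μ (s.indicator f) := by
  funext ξ
  simp_rw [expTransform, ← integral_indicator hs, indicator_mul_left]

variable [BorelSpace V]

theorem continuous_expTransform {μ : Measure V} {f : V → ℂ} (hf : Integrable f μ) :
    Continuous (expTransform μ f) := by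
  rw [expTransform_eq_fourierIntegral]
  exact VectorFourier.fourierIntegral_continuous Real.continuous_probChar continuous_neg_innerₗ hf

theorem memLp_expTransform {μ ν : Measure V} [IsFiniteMeasure μ] {g : V → ℂ}
    (hg : Integrable g ν) (p : ENNReal) : MemLp (expTransform ν g) p μ :=
  MemLp.of_bound (continuous_expTransform hg).aestronglyMeasurable _
    (Eventually.of_forall (norm_expTransform_le ν g))

theorem expTransform_add {μ : Measure V} {f g : V → ℂ} (hf : Integrable f μ)
    (hg : Integrable g μ) : expTransform μ (f + g) = expTransform μ f + expTransform μ g := by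
  simp only [expTransform_eq_fourierIntegral]
  exact VectorFourier.fourierIntegral_add Real.continuous_probChar continuous_neg_innerₗ hf hg

theorem expTransform_eq_zero_of_eventuallyEq_zero {μ : Measure V} {f : V → ℂ} {K : ℝ}
    (hf : Integrable f μ) (hK : ∀ᵐ x ∂μ, ‖x‖ ≤ K) (h0 : expTransform μ f =ᶠ[𝓝 0] 0) :
    expTransform μ f = 0 := by
  funext ξ
  set G : ℂ → ℂ := fun z ↦ ∫ x, f x * cexp (z * ⟪ξ, x⟫) ∂μ
  have hG : Differentiable ℂ G := differentiable_integral_mul_cexp hf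
    (continuous_const.inner continuous_id).aestronglyMeasurable
    (hK.mono fun x hx ↦ (abs_real_inner_le_norm ξ x).trans
      (mul_le_mul_of_nonneg_left hx (norm_nonneg ξ)))
  have hG_line : ∀ t : ℝ, G (I * t) = expTransform μ f (t • ξ) := fun t ↦ by
    simp only [G, expTransform, real_inner_smul_left, ofReal_mul, mul_assoc]
  have hG_zero : ∀ᶠ t : ℝ in 𝓝 0, G (I * t) = 0 := by
    have hline : Tendsto (fun t : ℝ ↦ t • ξ) (𝓝 0) (𝓝 0) := by
      simpa using (tendsto_id (x := 𝓝 (0 : ℝ))).smul_const ξ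
    filter_upwards [hline.eventually h0] with t ht
    rw [hG_line, ht, Pi.zero_apply]
  have hfreq : ∃ᶠ z in 𝓝[≠] 0, G z = 0 := by
    have hI : Tendsto (fun t : ℝ ↦ I * t) (𝓝[≠] 0) (𝓝[≠] 0) := by
      refine tendsto_nhdsWithin_of_tendsto_nhds_of_eventually_within _ ?_ ?_
      · have hc : Continuous fun t : ℝ ↦ I * t := by fun_prop
        simpa using (hc.tendsto 0).mono_left nhdsWithin_le_nhds
      · filter_upwards [self_mem_nhdsWithin] with t ht
        simpa using ht
    exact hI.frequently (hG_zero.filter_mono nhdsWithin_le_nhds).frequently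
  have := AnalyticOnNhd.eqOn_zero_of_preconnected_of_frequently_eq_zero
    (fun z _ ↦ hG.analyticAt z) isPreconnected_univ (mem_univ 0) hfreq (mem_univ I)
  have h1 := hG_line 1
  rw [ofReal_one, mul_one, one_smul] at h1
  rw [Pi.zero_apply, ← h1]
  exact this

variable [FiniteDimensional ℝ V]

theorem integral_expTransform_mul {μ ν : Measure V} [SigmaFinite μ] [SigmaFinite ν]
    {f g : V → ℂ} (hf : Integrable f μ) (hg : Integrable g ν) :
    ∫ ξ, expTransform μ f ξ * g ξ ∂ν = ∫ x, f x * expTransform ν g x ∂μ := by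
  have hflip : (-innerₗ V).flip = -innerₗ V := LinearMap.ext₂ fun x y ↦ by simp [real_inner_comm]
  simpa only [expTransform_eq_fourierIntegral, hflip, smul_eq_mul] using
    VectorFourier.integral_fourierIntegral_smul_eq_flip Real.continuous_probChar
      continuous_neg_innerₗ hf hg

theorem ae_eq_zero_of_fourier_eq_zero {E : Type*} [NormedAddCommGroup E] [NormedSpace ℂ E]
    [CompleteSpace E] {f : V → E} (hf : Integrable f) (h : 𝓕 f = 0) : f =ᵐ[volume] 0 := by
  refine ae_eq_zero_of_integral_contDiff_smul_eq_zero hf.locallyIntegrable fun g hg hgc ↦ ?_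
  -- A test function is the Fourier transform of a Schwartz function, and `𝓕` is self-adjoint.
  set φ : 𝓢(V, ℂ) := 𝓕⁻ ((hgc.comp_left ofReal_zero).toSchwartzMap (ofRealCLM.contDiff.comp hg))
  have hφ : ∀ x, (g x : ℂ) = 𝓕 (φ : V → ℂ) x := fun x ↦ by
    rw [← SchwartzMap.fourier_coe, FourierInvPair.fourier_fourierInv_eq]
    rfl
  calc ∫ x, g x • f x = ∫ x, 𝓕 (φ : V → ℂ) x • f x := by
        congr 1 with x
        rw [← hφ, Complex.coe_smul]
    _ = ∫ w, φ w • 𝓕 f w := by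
        refine (VectorFourier.integral_fourierIntegral_smul_eq_flip Real.continuous_fourierChar
          (innerSL ℝ (E := V)).continuous₂ (SchwartzMap.integrable _) hf).trans ?_
        congr 1 with w
        rw [Real.fourier_eq]
        simp only [VectorFourier.fourierIntegral, LinearMap.flip_apply, real_inner_comm]
        rfl
    _ = 0 := by simp [h]

theorem fourier_eq_expTransform (f : V → ℂ) (w : V) :
    𝓕 f w = expTransform volume f ((-(2 * Real.pi)) • w) := by
  rw [Real.fourier_eq', expTransform]
  congr 1 with x
  rw [real_inner_smul_left, real_inner_comm, smul_eq_mul]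
  push_cast
  ring_nf

theorem ae_eq_zero_of_expTransform_eq_zero {s : Set V} (hs : MeasurableSet s) {f : V → ℂ}
    (hf : IntegrableOn f s) (h : expTransform (volume.restrict s) f = 0) :
    f =ᵐ[volume.restrict s] 0 := by
  have hfs : 𝓕 (s.indicator f) = 0 := funext fun w ↦ by
    rw [fourier_eq_expTransform, ← expTransform_restrict _ hs, h, Pi.zero_apply, Pi.zero_apply]
  exact (indicator_ae_eq_restrict hs).symm.trans
    (ae_restrict_of_ae (ae_eq_zero_of_fourier_eq_zero ((integrable_indicator_iff hs).2 hf) hfs))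

def bandlimitedSubmodule (μ ν : Measure V) [IsFiniteMeasure ν] : Submodule ℂ (Lp ℂ 2 μ) where
  carrier := {v | ∃ g, MemLp g 2 ν ∧ v =ᵐ[μ] expTransform ν g}
  zero_mem' := ⟨0, MemLp.zero, (Lp.coeFn_zero _ _ _).trans <| .of_eq <| funext fun ξ ↦ by
    simp [expTransform]⟩
  add_mem' := by
    rintro u v ⟨f, hf, hu⟩ ⟨g, hg, hv⟩
    refine ⟨f + g, hf.add hg, ?_⟩
    rw [expTransform_add (hf.integrable one_le_two) (hg.integrable one_le_two)]
    exact (Lp.coeFn_add u v).trans (hu.add hv)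
  smul_mem' := by
    rintro c v ⟨g, hg, hv⟩
    refine ⟨c • g, hg.const_smul c, ?_⟩
    rw [expTransform_smul]
    exact (Lp.coeFn_smul c v).trans (hv.const_smul c)

theorem orthogonal_bandlimitedSubmodule_eq_bot {U B : Set V} (hU : MeasurableSet U)
    (hU_bdd : Bornology.IsBounded U) (hB : B ∈ 𝓝 0) [IsFiniteMeasure (volume.restrict B)] :
    (bandlimitedSubmodule (volume.restrict U) (volume.restrict B))ᗮ = ⊥ := by
  set μ := volume.restrict U
  set ν := volume.restrict B
  have : IsFiniteMeasure μ := isFiniteMeasure_restrict.2 hU_bdd.measure_lt_top.ne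
  refine (Submodule.eq_bot_iff _).2 fun ψ hψ ↦ ?_
  set φ : V → ℂ := fun x ↦ conj (ψ x)
  have hφ : Integrable φ μ := (Lp.memLp ψ).star.integrable one_le_two
  set F := expTransform μ φ
  have hF_orth : ∀ g, MemLp g 2 ν → ∫ ξ, F ξ * g ξ ∂ν = 0 := by
    intro g hg
    have he := memLp_expTransform (μ := μ) (hg.integrable one_le_two) 2
    rw [integral_expTransform_mul hφ (hg.integrable one_le_two),
      ← Submodule.inner_left_of_mem_orthogonal
        (show he.toLp _ ∈ bandlimitedSubmodule μ ν from ⟨g, hg, he.coeFn_toLp⟩) hψ, L2.inner_def]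
    refine integral_congr_ae ?_
    filter_upwards [he.coeFn_toLp] with x hx
    simp [φ, hx, RCLike.inner_apply, mul_comm]
  have hF_ae : F =ᵐ[ν] 0 :=
    ae_eq_zero_of_forall_integral_mul_eq_zero (memLp_expTransform hφ 2) hF_orth
  have hF_nhds : F =ᶠ[𝓝 0] 0 :=
    eventuallyEq_of_ae_restrict_eq (continuous_expTransform hφ) continuous_const hF_ae hB
  obtain ⟨K, hK⟩ := hU_bdd.subset_closedBall 0
  have hF : F = 0 := expTransform_eq_zero_of_eventuallyEq_zero hφ
    (ae_restrict_of_forall_mem hU fun x hx ↦ mem_closedBall_zero_iff.1 (hK hx)) hF_nhds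
  refine Lp.eq_zero_iff_ae_eq_zero.2 ?_
  filter_upwards [ae_eq_zero_of_expTransform_eq_zero hU hφ hF] with x hx
  simpa [φ] using hx

theorem bandlimited_dense_in_ball_general (d : ℕ) (ω : ℝ) (hω : 0 < ω)
    (x₀ : EuclideanSpace ℝ (Fin d)) (R : ℝ)
    (h : EuclideanSpace ℝ (Fin d) → ℂ)
    (hh : MemLp h 2 (volume.restrict (ball x₀ R)))
    (ε : ℝ) (hε : 0 < ε) :
    ∃ g : EuclideanSpace ℝ (Fin d) → ℂ,
      MemLp g 2 (volume.restrict (closedBall (0 : EuclideanSpace ℝ (Fin d)) ω)) ∧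
      ∫ x in ball x₀ R,
          ‖h x - ∫ ξ in closedBall (0 : EuclideanSpace ℝ (Fin d)) ω,
              g ξ * Complex.exp (Complex.I * ((inner ℝ x ξ : ℝ) : ℂ))‖ ^ 2 < ε ^ 2 := by
  have : IsFiniteMeasure (volume.restrict (closedBall (0 : EuclideanSpace ℝ (Fin d)) ω)) :=
    isFiniteMeasure_restrict.2 measure_closedBall_lt_top.ne
  have hdense := Submodule.topologicalClosure_eq_top_iff.2 <|
    orthogonal_bandlimitedSubmodule_eq_bot (measurableSet_ball (x := x₀) (ε := R)) isBounded_ball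
      (closedBall_mem_nhds (0 : EuclideanSpace ℝ (Fin d)) hω)
  have hmem : hh.toLp h ∈ (bandlimitedSubmodule _ _).topologicalClosure :=
    hdense ▸ Submodule.mem_top
  obtain ⟨v, ⟨g, hg, hv⟩, hdist⟩ := Metric.mem_closure_iff.1 hmem ε hε
  refine ⟨g, hg, ?_⟩
  calc _ = ‖hh.toLp h - v‖ ^ 2 := by
        rw [Lp.norm_sq_eq_integral]
        refine integral_congr_ae ?_
        filter_upwards [Lp.coeFn_sub (hh.toLp h) v, hh.coeFn_toLp, hv] with x hsub hhx hvx
        rw [hsub, Pi.sub_apply, hhx, hvx]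
        rfl
    _ < ε ^ 2 := by
        rw [← dist_eq_norm]
        gcongr

/-- Euclidean analog of Theorem 3.2: restrictions of `ω`-band limited functions
`e_g x = ∫_{‖ξ‖ ≤ ω} g(ξ) e^{i⟨x,ξ⟩} dξ`, `g ∈ L²(B̄(0, ω))`, to any open ball `U`
are dense in `L²(U)`. -/
theorem bandlimited_dense_in_ball (d : ℕ) (hd : 1 ≤ d) (ω : ℝ) (hω : 0 < ω)
    (x₀ : EuclideanSpace ℝ (Fin d)) (R : ℝ) (hR : 0 < R)
    (h : EuclideanSpace ℝ (Fin d) → ℂ)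
    (hh : MemLp h 2 (volume.restrict (ball x₀ R)))
    (ε : ℝ) (hε : 0 < ε) :
    ∃ g : EuclideanSpace ℝ (Fin d) → ℂ,
      MemLp g 2 (volume.restrict (closedBall (0 : EuclideanSpace ℝ (Fin d)) ω)) ∧
      ∫ x in ball x₀ R,
          ‖h x - ∫ ξ in closedBall (0 : EuclideanSpace ℝ (Fin d)) ω,
              g ξ * Complex.exp (Complex.I * ((inner ℝ x ξ : ℝ) : ℂ))‖ ^ 2 < ε ^ 2 :=
  bandlimited_dense_in_ball_general d ω hω x₀ R h hh ε hε
end
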